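/- Let S be a commutative local ring with maximal ideal m and residue field κ = S/m. Then there is an isomorphism Ext¹_S(κ, κ) ≅ Hom_S(m/m², κ) (equivalently, the tangent space Hom_κ(m/m², κ) of S at its closed point). -/

import Mathlib

open CategoryTheory Opposite IsLocalRing

/-!
Resolve `R ⧸ I` by `⋯ → P₂ → R^(I) → R → R ⧸ I`, where `R^(I) → R` evaluates formal
combinations of elements of `I`. If `I` kills `M`, so does the image of every map `R → M`; hence
the first differential of `Hom(-, M)` vanishes and `Ext¹(R ⧸ I, M)` is the kernel of
`Hom(R^(I), M) → Hom(P₂, M)`. Left exactness of `Hom(-, M)` on `P₂ → R^(I) → I → 0` identifies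
this kernel with `Hom(I, M)`, and a linear `f : I → M` kills `I²` since `f (x * y) = x • f y = 0`,
so `Hom(I, M) = Hom(I/I², M)`.
-/

universe v u w

namespace CategoryTheory.ProjectiveResolution

open Limits

variable {C : Type u} [Category.{v} C] [Abelian C] [EnoughProjectives C]

/-- Continues `P₁ ⟶ P₀` by projective covers of the successive kernels, as in
`ProjectiveResolution.ofComplex`. -/
noncomputable def ofPresentationComplex {P₀ P₁ : C} (d : P₁ ⟶ P₀) : ChainComplex C ℕ :=
  ChainComplex.mk' P₀ P₁ d fun f => ⟨_, Projective.d f, by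
    show (Projective.π _ ≫ kernel.ι f) ≫ f = 0
    rw [Category.assoc, kernel.condition, comp_zero]⟩

variable {X P₀ P₁ : C} (d : P₁ ⟶ P₀)

lemma ofPresentationComplex_d_one_zero : (ofPresentationComplex d).d 1 0 = d :=
  ChainComplex.mk'_d_1_0 ..

lemma ofPresentationComplex_exactAt_succ (n : ℕ) :
    (ofPresentationComplex d).ExactAt (n + 1) := by
  rw [HomologicalComplex.exactAt_iff' _ (n + 1 + 1) (n + 1) n (by simp) (by simp)]
  refine (ShortComplex.exact_iff_of_iso ?_).1 (exact_d_f ((ofPresentationComplex d).d (n + 1) n))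
  refine ShortComplex.isoMk ?_ (Iso.refl _) (Iso.refl _) ?_ ?_
  · dsimp only [ofPresentationComplex]
    exact (ChainComplex.mk'XIso P₀ P₁ d (fun f => ⟨_, Projective.d f, _⟩) n).symm
  · dsimp only [ofPresentationComplex, HomologicalComplex.sc',
      HomologicalComplex.shortComplexFunctor']
    rw [ChainComplex.mk'_d]
    exact (Iso.inv_hom_id_assoc _ _).trans (Category.comp_id _).symm
  · exact (Category.id_comp _).trans (Category.comp_id _).symm

instance [Projective P₀] [Projective P₁] (n : ℕ) :
    Projective ((ofPresentationComplex d).X n) := by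
  obtain (_ | _ | _ | n) := n
  · dsimp [ofPresentationComplex]; infer_instance
  · dsimp [ofPresentationComplex]; infer_instance
  all_goals apply Projective.projective_over

noncomputable def ofPresentation [Projective P₀] [Projective P₁] (π : P₀ ⟶ X) [Epi π]
    (w : d ≫ π = 0) (h : (ShortComplex.mk d π w).Exact) : ProjectiveResolution X where
  complex := ofPresentationComplex d
  π := (ChainComplex.toSingle₀Equiv _ _).symm ⟨π, by rwa [ofPresentationComplex_d_one_zero]⟩
  quasiIso := ⟨fun n => by
    cases n
    · rw [ChainComplex.quasiIsoAt₀_iff, ShortComplex.quasiIso_iff_of_zeros']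
      · refine (ShortComplex.exact_and_epi_g_iff_of_iso ?_).2 ⟨h, by assumption⟩
        refine ShortComplex.isoMk (Iso.refl _) (Iso.refl _) (Iso.refl _) ?_ ?_
        · exact (Category.id_comp _).trans
            ((ofPresentationComplex_d_one_zero d).symm.trans (Category.comp_id _).symm)
        · exact (Category.id_comp _).trans <|
            (ChainComplex.toSingle₀Equiv_symm_apply_f_zero
              (C := ofPresentationComplex d) π _).symm.trans (Category.comp_id _).symm
      all_goals rfl
    · rw [quasiIsoAt_iff_exactAt']
      · apply ofPresentationComplex_exactAt_succ
      · apply ChainComplex.exactAt_succ_single_obj⟩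

end CategoryTheory.ProjectiveResolution

noncomputable def Function.Exact.linearEquivKerLcomp {R : Type*} [CommRing R]
    {M₁ M₂ M₃ : Type*} (N : Type*) [AddCommGroup M₁] [AddCommGroup M₂] [AddCommGroup M₃]
    [AddCommGroup N] [Module R M₁] [Module R M₂] [Module R M₃] [Module R N]
    {f : M₁ →ₗ[R] M₂} {g : M₂ →ₗ[R] M₃} (h : Function.Exact f g) (hg : Function.Surjective g) :
    (M₃ →ₗ[R] N) ≃ₗ[R] LinearMap.ker (LinearMap.lcomp R N f) :=
  (LinearEquiv.ofInjective _ (LinearMap.lcomp_injective_of_surjective g hg)).trans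
    (LinearEquiv.ofEq _ _
      (LinearMap.exact_lcomp_of_exact_of_surjective N h hg).linearMap_ker_eq.symm)

namespace Ideal

open CategoryTheory.ProjectiveResolution

variable {R : Type w} [CommRing R] (I : Ideal R)

lemma lcomp_toCotangent_bijective {M : Type*} [AddCommGroup M] [Module R M]
    (hM : Module.IsTorsionBySet R M I) :
    Function.Bijective (LinearMap.lcomp R M I.toCotangent) := by
  refine ⟨LinearMap.lcomp_injective_of_surjective _ I.toCotangent_surjective, fun f => ?_⟩
  have hf (x y : I) : f (x * y) = 0 := (f.map_smul (x : R) y).trans (@hM _ ⟨x, x.2⟩)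
  exact ⟨Cotangent.lift f hf, Cotangent.lift_comp_toCotangent f hf⟩

noncomputable def quotientResolution : ProjectiveResolution (ModuleCat.of R (R ⧸ I)) :=
  have : Epi (ModuleCat.ofHom I.mkQ) := (ModuleCat.epi_iff_surjective _).2 I.mkQ_surjective
  ofPresentation (ModuleCat.ofHom (I.subtype ∘ₗ Finsupp.linearCombination R id))
    (ModuleCat.ofHom I.mkQ) (ModuleCat.hom_ext <| LinearMap.ext fun v =>
      Ideal.Quotient.eq_zero_iff_mem.2 (Finsupp.linearCombination R id v).2) (by
      rw [ShortComplex.moduleCat_exact_iff_range_eq_ker]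
      simp [LinearMap.range_comp, Finsupp.range_linearCombination])

lemma quotientResolution_d_one_zero : (quotientResolution I).complex.d 1 0 =
    ModuleCat.ofHom (I.subtype ∘ₗ Finsupp.linearCombination R id) :=
  ofPresentationComplex_d_one_zero _

lemma quotientResolution_exact_d_two_one :
    Function.Exact ((quotientResolution I).complex.d 2 1).hom
      (Finsupp.linearCombination R id) := by
  have h := (ofPresentationComplex_exactAt_succ
    (ModuleCat.ofHom (I.subtype ∘ₗ Finsupp.linearCombination R id)) 0)
  rw [HomologicalComplex.exactAt_iff' _ 2 1 0 (by simp) (by simp),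
    ShortComplex.moduleCat_exact_iff_range_eq_ker] at h
  refine LinearMap.exact_iff.2 (Eq.trans ?_ h.symm)
  change _ = LinearMap.ker ((quotientResolution I).complex.d 1 0).hom
  rw [quotientResolution_d_one_zero]
  exact (LinearMap.ker_comp_of_ker_eq_bot _ I.ker_subtype).symm

variable {I} (M : ModuleCat.{w} R)

lemma linearYonedaObj_quotientResolution_d_zero_one (hM : Module.IsTorsionBySet R M I) :
    ((quotientResolution I).complex.linearYonedaObj R M).d 0 1 = 0 := by
  ext (φ : ModuleCat.of R R ⟶ M) : 2
  refine ModuleCat.hom_ext (LinearMap.ext fun v => ?_)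
  change φ ((quotientResolution I).complex.d 1 0 v) = 0
  rw [quotientResolution_d_one_zero]
  change φ (Finsupp.linearCombination R id v : I) = 0
  generalize Finsupp.linearCombination R id v = x
  calc φ (x : R) = φ ((x : R) • 1) := by rw [smul_eq_mul, mul_one]
    _ = (x : R) • φ 1 := φ.hom.map_smul _ 1
    _ = 0 := @hM _ ⟨x, x.2⟩

noncomputable def kerLinearYonedaObjEquiv :
    LinearMap.ker (((quotientResolution I).complex.linearYonedaObj R M).d 1 2).hom ≃ₗ[R]
      LinearMap.ker (LinearMap.lcomp R M ((quotientResolution I).complex.d 2 1).hom) :=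
  ModuleCat.homLinearEquiv.ofSubmodules _ _ <|
    (Submodule.map_equiv_eq_comap_symm _ _).trans <| by
      ext φ
      exact ModuleCat.hom_ext_iff

noncomputable def extOneQuotientIsoKer (hM : Module.IsTorsionBySet R M I) :
    ((Ext R (ModuleCat.{w} R) 1).obj (op (ModuleCat.of R (R ⧸ I)))).obj M ≅
      ModuleCat.of R (LinearMap.ker
        (((quotientResolution I).complex.linearYonedaObj R M).d 1 2).hom) :=
  (quotientResolution I).isoExt 1 M ≪≫
    (HomologicalComplex.isoHomologyπ _ 0 1 (by simp)
      (linearYonedaObj_quotientResolution_d_zero_one M hM)).symm ≪≫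
    HomologicalComplex.cyclesIsoSc' _ 0 1 2 (by simp) (by simp) ≪≫
    ShortComplex.moduleCatCyclesIso _

noncomputable def extOneQuotientEquiv (hM : Module.IsTorsionBySet R M I) :
    ((Ext R (ModuleCat.{w} R) 1).obj (op (ModuleCat.of R (R ⧸ I)))).obj M ≃ₗ[R]
      (I.Cotangent →ₗ[R] M) :=
  (extOneQuotientIsoKer M hM).toLinearEquiv ≪≫ₗ
    kerLinearYonedaObjEquiv M ≪≫ₗ
    ((quotientResolution_exact_d_two_one I).linearEquivKerLcomp M
      (Finsupp.linearCombination_id_surjective R I)).symm ≪≫ₗ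
    (LinearEquiv.ofBijective _ (lcomp_toCotangent_bijective I hM)).symm

end Ideal

/-- For a commutative local ring `S` with maximal ideal `m` and residue field
`κ = S/m`, there is an isomorphism `Ext¹_S(κ, κ) ≅ Hom_S(m/m², κ)` (the tangent
space of `S` at its closed point). -/
theorem ext_one_residue_field_iso_hom_cotangent
    (S : Type) [CommRing S] [IsLocalRing S] :
    Nonempty
      ((((Ext S (ModuleCat S) 1).obj
            (op (ModuleCat.of S (ResidueField S)))).obj
          (ModuleCat.of S (ResidueField S))) ≃ₗ[S]
        ((maximalIdeal S).Cotangent →ₗ[S] ResidueField S)) :=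
  ⟨(maximalIdeal S).extOneQuotientEquiv (ModuleCat.of S (ResidueField S))
    ((Module.isTorsionBySet_iff_subset_annihilator _ _).2 Ideal.annihilator_quotient.ge)⟩
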